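/- arXiv:1912.01523 — 4 statements merged into one kernel-verified Lean document; each statement's English description precedes it below -/
import Mathlib

section
/- Let L₁, L₂ be unit circles in ℝ² whose centres are at distance d with δ^{1/2} ≤ d ≤ 2 - δ^{1/2}, where 0 < δ < 10⁻⁴. Then the set of points on L₁ at distance at most δ from L₂ can be covered by two rectangles of dimensions 2δ × 100δ^{1/2}. -/
open Metric Set Real

/-- `R` is a rectangle of dimensions `a × b`: an isometric copy of `[0,a] × [0,b]`. -/
def IsRectangle (R : Set (EuclideanSpace ℝ (Fin 2))) (a b : ℝ) : Prop :=
  ∃ f : EuclideanSpace ℝ (Fin 2) ≃ᵢ EuclideanSpace ℝ (Fin 2),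
    R = f '' {x | x 0 ∈ Set.Icc 0 a ∧ x 1 ∈ Set.Icc 0 b}

/-!
Move `c₁` to `0` and `c₂` to `d > 0` in `ℂ`. A point `ζ` of the unit circle within `δ = s²` of the
other circle satisfies `|Re ζ - d/2| ≲ s²/d ≤ s`. The intersection point `p = d/2 + ih` has
`h² ≥ s/2` because `d ≤ 2 - s`, so `(Im ζ - h)(Im ζ + h) = (d/2 - Re ζ)(d/2 + Re ζ)` forces
`|Im ζ - h| ≲ s^{3/2}`; altogether `‖ζ - p‖² ≤ 2δ` when `Im ζ ≥ 0`, and `‖ζ - p̄‖² ≤ 2δ` otherwise.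
In the frame rotated by `p`, the radial coordinate `Re (p̄ζ) = 1 - ‖ζ - p‖²/2` lies in `[1 - δ, 1]`
and the tangential one satisfies `|Im (p̄ζ)| ≤ ‖ζ - p‖ ≤ 50 s`: a `2δ × 100 s` rectangle.
-/

open Complex ComplexConjugate

theorem abs_dist_sub_le_infDist_sphere {E : Type*} [PseudoMetricSpace E] {c : E} {r : ℝ}
    (hne : (sphere c r).Nonempty) (x : E) : |dist x c - r| ≤ infDist x (sphere c r) :=
  (le_infDist hne).2 fun y hy => by rw [← mem_sphere.1 hy]; exact abs_dist_sub_le x y c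

theorem isRectangle_setOf_inv_mul_sub (ψ : EuclideanSpace ℝ (Fin 2) ≃ᵢ ℂ) (u : Circle) (c : ℂ)
    (a b : ℝ) :
    IsRectangle {x | ((u : ℂ)⁻¹ * ψ x - c).re ∈ Icc 0 a ∧ ((u : ℂ)⁻¹ * ψ x - c).im ∈ Icc 0 b}
      a b := by
  set f := orthonormalBasisOneI.repr.symm.toIsometryEquiv.trans <|
    (IsometryEquiv.addRight c).trans <| (rotation u).toIsometryEquiv.trans ψ.symm
  have hf : ∀ x, f.symm x = orthonormalBasisOneI.repr ((u : ℂ)⁻¹ * ψ x - c) := fun x => by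
    simp only [f, IsometryEquiv.symm_trans_apply, LinearIsometryEquiv.coe_symm_toIsometryEquiv,
      IsometryEquiv.symm_symm, LinearIsometryEquiv.symm_symm, IsometryEquiv.addRight_symm,
      rotation_symm, rotation_apply, Circle.coe_inv]
    rfl
  refine ⟨f, ?_⟩
  ext x
  simp [← IsometryEquiv.preimage_symm, hf, orthonormalBasisOneI_repr_apply]

theorem exists_isometryEquiv_complex (c₁ c₂ : EuclideanSpace ℝ (Fin 2)) :
    ∃ ψ : EuclideanSpace ℝ (Fin 2) ≃ᵢ ℂ, ψ c₁ = 0 ∧ ψ c₂ = dist c₁ c₂ := by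
  set w := orthonormalBasisOneI.repr.symm c₂ - orthonormalBasisOneI.repr.symm c₁
  refine ⟨orthonormalBasisOneI.repr.symm.toIsometryEquiv.trans <|
    (IsometryEquiv.subRight (orthonormalBasisOneI.repr.symm c₁)).trans
      (rotation (Circle.exp (-arg w))).toIsometryEquiv, by simp, ?_⟩
  have hw : ‖w‖ = dist c₁ c₂ := by
    rw [dist_comm, ← LinearIsometryEquiv.dist_map orthonormalBasisOneI.repr.symm, dist_eq_norm]
  calc rotation (Circle.exp (-arg w)) w = exp (-arg w * I) * (‖w‖ * exp (arg w * I)) := by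
        rw [rotation_apply, Circle.coe_exp, norm_mul_exp_arg_mul_I, ofReal_neg]
    _ = dist c₁ c₂ := by rw [mul_left_comm, ← Complex.exp_add, hw]; simp

theorem norm_inv_mul_sub_one (u : Circle) (ζ : ℂ) : ‖(u : ℂ)⁻¹ * ζ - 1‖ = ‖ζ - u‖ := by
  rw [← inv_mul_cancel₀ (Circle.coe_ne_zero u), ← mul_sub, norm_mul, norm_inv, Circle.norm_coe,
    inv_one, one_mul]

theorem re_inv_mul_eq_one_sub_sq_norm_sub (u : Circle) {ζ : ℂ} (hζ : ‖ζ‖ = 1) :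
    ((u : ℂ)⁻¹ * ζ).re = 1 - ‖ζ - u‖ ^ 2 / 2 := by
  have hw : ‖(u : ℂ)⁻¹ * ζ‖ ^ 2 = 1 := by
    rw [norm_mul, norm_inv, Circle.norm_coe, hζ]; norm_num
  rw [← norm_inv_mul_sub_one, Complex.sq_norm, normSq_apply]
  rw [Complex.sq_norm, normSq_apply] at hw
  simp only [sub_re, one_re, sub_im, one_im]
  linear_combination hw / 2

theorem abs_im_inv_mul_le_norm_sub (u : Circle) (ζ : ℂ) : |((u : ℂ)⁻¹ * ζ).im| ≤ ‖ζ - u‖ := by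
  rw [← norm_inv_mul_sub_one]
  simpa using abs_im_le_norm ((u : ℂ)⁻¹ * ζ - 1)

/-- For `0 ≤ d ≤ 2`, the intersection point in the closed upper half-plane of the unit circles
centred at `0` and `d`. -/
noncomputable def intersectionPoint (d : ℝ) : Circle := Circle.exp (arccos (d / 2))

theorem intersectionPoint_re {d : ℝ} (hd₀ : -2 ≤ d) (hd₂ : d ≤ 2) :
    (intersectionPoint d : ℂ).re = d / 2 := by
  rw [intersectionPoint, Circle.coe_exp, exp_ofReal_mul_I_re,
    cos_arccos (by linarith) (by linarith)]

theorem intersectionPoint_im (d : ℝ) : (intersectionPoint d : ℂ).im = √(1 - (d / 2) ^ 2) := by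
  rw [intersectionPoint, Circle.coe_exp, exp_ofReal_mul_I_im, sin_arccos]

theorem abs_re_sub_half_mul_le {d δ : ℝ} {ζ : ℂ} (hd : 0 ≤ d) (hζ : ‖ζ‖ = 1)
    (h : |‖ζ - d‖ - 1| ≤ δ) : |ζ.re - d / 2| * (2 * d) ≤ δ * (2 + δ) := by
  have hr : (ζ.re - d / 2) * (2 * d) = (1 - ‖ζ - d‖) * (1 + ‖ζ - d‖) := by
    have h1 := Complex.sq_norm ζ
    have h2 := Complex.sq_norm (ζ - d)
    rw [hζ, normSq_apply] at h1
    rw [normSq_apply, sub_re, sub_im, ofReal_re, ofReal_im] at h2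
    linear_combination h2 - h1
  rw [← abs_of_nonneg (by positivity : 0 ≤ 2 * d), ← abs_mul, hr, abs_mul, abs_sub_comm,
    abs_of_nonneg (by positivity : 0 ≤ 1 + ‖ζ - d‖)]
  exact mul_le_mul h (by linarith [(abs_le.1 h).2]) (by positivity) ((abs_nonneg _).trans h)

theorem abs_im_sub_mul_im_le {z w : ℂ} (hz : ‖z‖ = 1) (hw : ‖w‖ = 1) (hz₀ : 0 ≤ z.im)
    (hw₀ : 0 ≤ w.im) : |z.im - w.im| * w.im ≤ |z.re - w.re| * |z.re + w.re| := by
  have hsq : (z.im - w.im) * (z.im + w.im) = -((z.re - w.re) * (z.re + w.re)) := by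
    have h1 := Complex.sq_norm z
    have h2 := Complex.sq_norm w
    rw [hz, normSq_apply] at h1
    rw [hw, normSq_apply] at h2
    linear_combination h2 - h1
  calc |z.im - w.im| * w.im ≤ |z.im - w.im| * (z.im + w.im) := by gcongr; linarith
    _ = |z.re - w.re| * |z.re + w.re| := by
      rw [← abs_of_nonneg (by linarith : 0 ≤ z.im + w.im), ← abs_mul, hsq, abs_neg, abs_mul]

theorem sq_add_sq_le_of_mul_le {s d h a t : ℝ} (hs : 0 < s) (hs' : s < 1 / 100) (hsd : s ≤ d)
    (hh₀ : 0 ≤ h) (hh : s ≤ 2 * h ^ 2) (ha₀ : 0 ≤ a) (ht₀ : 0 ≤ t)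
    (ha : a * (2 * d) ≤ s ^ 2 * (2 + s ^ 2)) (ht : t * h ≤ a * (d + a)) :
    a ^ 2 + t ^ 2 ≤ 2 * s ^ 2 := by
  have hs2 : s ^ 2 * s ^ 2 ≤ s ^ 2 / 100 := by
    have : s ^ 2 ≤ 1 / 100 := by nlinarith
    nlinarith [sq_nonneg s]
  have had : a * d ≤ 101 / 100 * s ^ 2 := by nlinarith
  have has : a ≤ 101 / 100 * s := by nlinarith
  have hth : t * h ≤ 51 / 25 * s ^ 2 := by nlinarith
  have hts : t ^ 2 * s ≤ 2 * (51 / 25 * s ^ 2) ^ 2 := by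
    calc t ^ 2 * s ≤ t ^ 2 * (2 * h ^ 2) := by gcongr
      _ = 2 * (t * h) ^ 2 := by ring
      _ ≤ 2 * (51 / 25 * s ^ 2) ^ 2 := by gcongr
  have ht' : t ^ 2 ≤ s ^ 2 / 10 := by nlinarith
  nlinarith

theorem sq_norm_sub_intersectionPoint_le {s d : ℝ} {ζ : ℂ} (hs : 0 < s) (hs' : s < 1 / 100)
    (hsd : s ≤ d) (hd : d ≤ 2 - s) (hζ : ‖ζ‖ = 1) (hζd : |‖ζ - d‖ - 1| ≤ s ^ 2)
    (him : 0 ≤ ζ.im) : ‖ζ - intersectionPoint d‖ ^ 2 ≤ 2 * s ^ 2 := by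
  set p := intersectionPoint d
  have hre : (p : ℂ).re = d / 2 := intersectionPoint_re (by linarith) (by linarith)
  have him_p : (p : ℂ).im = √(1 - (d / 2) ^ 2) := intersectionPoint_im d
  have him_p₀ : 0 ≤ (p : ℂ).im := him_p ▸ sqrt_nonneg _
  have hh : s ≤ 2 * (p : ℂ).im ^ 2 := by rw [him_p, sq_sqrt (by nlinarith)]; nlinarith
  have hsum : |ζ.re + d / 2| ≤ d + |ζ.re - d / 2| := by
    calc |ζ.re + d / 2| = |d + (ζ.re - d / 2)| := by ring_nf
      _ ≤ |d| + |ζ.re - d / 2| := abs_add_le _ _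
      _ = d + |ζ.re - d / 2| := by rw [abs_of_nonneg (by linarith)]
  rw [Complex.sq_norm, normSq_apply, sub_re, sub_im, hre, ← sq, ← sq, ← sq_abs (ζ.re - _),
    ← sq_abs (ζ.im - _)]
  refine sq_add_sq_le_of_mul_le hs hs' hsd him_p₀ hh (abs_nonneg _) (abs_nonneg _)
    (abs_re_sub_half_mul_le (by linarith) hζ hζd) ?_
  calc |ζ.im - (p : ℂ).im| * (p : ℂ).im ≤ |ζ.re - (p : ℂ).re| * |ζ.re + (p : ℂ).re| :=
        abs_im_sub_mul_im_le hζ (Circle.norm_coe p) him him_p₀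
    _ ≤ |ζ.re - d / 2| * (d + |ζ.re - d / 2|) := by rw [hre]; gcongr

theorem sq_norm_sub_intersectionPoint_le_or {s d : ℝ} {ζ : ℂ} (hs : 0 < s) (hs' : s < 1 / 100)
    (hsd : s ≤ d) (hd : d ≤ 2 - s) (hζ : ‖ζ‖ = 1) (hζd : |‖ζ - d‖ - 1| ≤ s ^ 2) :
    ‖ζ - intersectionPoint d‖ ^ 2 ≤ 2 * s ^ 2 ∨
      ‖ζ - ↑(intersectionPoint d)⁻¹‖ ^ 2 ≤ 2 * s ^ 2 := by
  rcases le_total 0 ζ.im with him | him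
  · exact Or.inl (sq_norm_sub_intersectionPoint_le hs hs' hsd hd hζ hζd him)
  · right
    have hconj : ‖conj ζ - d‖ = ‖ζ - d‖ := by
      rw [← conj_ofReal, ← map_sub, RCLike.norm_conj, conj_ofReal]
    have := sq_norm_sub_intersectionPoint_le (ζ := conj ζ) hs hs' hsd hd
      (by rwa [RCLike.norm_conj]) (by rwa [hconj]) (by simpa using him)
    rwa [Circle.coe_inv_eq_conj, ← RCLike.norm_conj, map_sub, conj_conj]

theorem inv_mul_sub_mem_box {s : ℝ} (hs : 0 ≤ s) (u : Circle) {ζ : ℂ} (hζ : ‖ζ‖ = 1)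
    (h : ‖ζ - u‖ ^ 2 ≤ 2 * s ^ 2) :
    ((u : ℂ)⁻¹ * ζ - ⟨1 - s ^ 2, -(50 * s)⟩).re ∈ Icc 0 (2 * s ^ 2) ∧
      ((u : ℂ)⁻¹ * ζ - ⟨1 - s ^ 2, -(50 * s)⟩).im ∈ Icc 0 (100 * s) := by
  have hre := re_inv_mul_eq_one_sub_sq_norm_sub u hζ
  have him := abs_le.1 ((abs_im_inv_mul_le_norm_sub u ζ).trans
    (show ‖ζ - u‖ ≤ 50 * s by nlinarith [norm_nonneg (ζ - u)]))
  simp only [sub_re, sub_im, mem_Icc]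
  constructor <;> constructor <;> linarith [sq_nonneg ‖ζ - u‖]

theorem near_intersection_covered_by_two_rectangles
    (δ : ℝ) (hδ : 0 < δ) (hδ' : δ < 1 / 10 ^ 4)
    (c₁ c₂ : EuclideanSpace ℝ (Fin 2))
    (hd₁ : Real.sqrt δ ≤ dist c₁ c₂) (hd₂ : dist c₁ c₂ ≤ 2 - Real.sqrt δ) :
    ∃ R₁ R₂ : Set (EuclideanSpace ℝ (Fin 2)),
      IsRectangle R₁ (2 * δ) (100 * Real.sqrt δ) ∧
      IsRectangle R₂ (2 * δ) (100 * Real.sqrt δ) ∧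
      {x ∈ Metric.sphere c₁ 1 | Metric.infDist x (Metric.sphere c₂ 1) ≤ δ} ⊆ R₁ ∪ R₂ := by
  obtain ⟨s, hs, rfl⟩ : ∃ s, 0 < s ∧ δ = s ^ 2 := ⟨√δ, sqrt_pos.2 hδ, (sq_sqrt hδ.le).symm⟩
  rw [sqrt_sq hs.le] at hd₁ hd₂ ⊢
  have hs' : s < 1 / 100 := by nlinarith
  obtain ⟨ψ, hψ₁, hψ₂⟩ := exists_isometryEquiv_complex c₁ c₂
  set p := intersectionPoint (dist c₁ c₂)
  refine ⟨_, _, isRectangle_setOf_inv_mul_sub ψ p ⟨1 - s ^ 2, -(50 * s)⟩ _ _,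
    isRectangle_setOf_inv_mul_sub ψ p⁻¹ ⟨1 - s ^ 2, -(50 * s)⟩ _ _, ?_⟩
  rintro x ⟨hx₁, hx₂⟩
  have hζ : ‖ψ x‖ = 1 := by rw [← dist_zero_right, ← hψ₁, ψ.dist_eq]; exact hx₁
  have hζd : |‖ψ x - dist c₁ c₂‖ - 1| ≤ s ^ 2 := by
    rw [← hψ₂, ← dist_eq_norm, ψ.dist_eq]
    exact (abs_dist_sub_le_infDist_sphere (NormedSpace.sphere_nonempty.2 zero_le_one) x).trans hx₂
  exact (sq_norm_sub_intersectionPoint_le_or hs hs' hd₁ hd₂ hζ hζd).imp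
    (inv_mul_sub_mem_box hs.le _ hζ) (inv_mul_sub_mem_box hs.le _ hζ)
end

section
/- Let L₁, L₂ be unit circles in ℝ² whose centres are at distance d with δ^{1/2} ≤ d ≤ 2 - δ^{1/2}. At each of the two intersection points of L₁ and L₂, the angle between the tangent lines of L₁ and L₂ is at least c·δ^{1/2} for some absolute constant c > 0. -/
open Metric Set Real

/-!
With `x = p - c₁`, `y = p - c₂` and `θ = ∠(x, y)`: a chord is shorter than its arc, so
`θ ≥ ‖x - y‖ = d` and `π - θ = ∠(x, -y) ≥ ‖x + y‖ ≥ 2‖x‖ - ‖x - y‖ = 2 - d`.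
Both are therefore at least `√δ`, and `c = 1` works.
-/

namespace InnerProductGeometry

variable {V : Type*} [NormedAddCommGroup V] [InnerProductSpace ℝ V]

theorem norm_sub_le_angle_of_norm_eq_one {x y : V} (hx : ‖x‖ = 1) (hy : ‖y‖ = 1) :
    ‖x - y‖ ≤ angle x y := by
  have hcos : ‖x - y‖ ^ 2 = 2 * (1 - Real.cos (angle x y)) := by
    rw [sq, norm_sub_sq_eq_norm_sq_add_norm_sq_sub_two_mul_norm_mul_norm_mul_cos_angle, hx, hy]
    ring
  have hsq : ‖x - y‖ ^ 2 ≤ angle x y ^ 2 := by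
    linarith [Real.one_sub_sq_div_two_le_cos (x := angle x y)]
  exact abs_le_of_sq_le_sq' hsq (angle_nonneg x y) |>.2

theorem norm_add_le_pi_sub_angle_of_norm_eq_one {x y : V} (hx : ‖x‖ = 1) (hy : ‖y‖ = 1) :
    ‖x + y‖ ≤ π - angle x y := by
  simpa [sub_neg_eq_add, angle_neg_right] using
    norm_sub_le_angle_of_norm_eq_one hx ((norm_neg y).trans hy)

end InnerProductGeometry

theorem tangent_angle_at_intersection_ge :
    ∃ c > 0, ∀ (δ : ℝ) (c₁ c₂ : EuclideanSpace ℝ (Fin 2)),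
      0 < δ → δ < 1 / 10 ^ 4 →
      Real.sqrt δ ≤ dist c₁ c₂ → dist c₁ c₂ ≤ 2 - Real.sqrt δ →
      ∀ p ∈ Metric.sphere c₁ 1 ∩ Metric.sphere c₂ 1,
        c * Real.sqrt δ ≤
          min (InnerProductGeometry.angle (p - c₁) (p - c₂))
            (π - InnerProductGeometry.angle (p - c₁) (p - c₂)) := by
  refine ⟨1, one_pos, fun δ c₁ c₂ _ _ hd_ge hd_le p ⟨hp₁, hp₂⟩ => ?_⟩
  have hx : ‖p - c₁‖ = 1 := mem_sphere_iff_norm.mp hp₁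
  have hy : ‖p - c₂‖ = 1 := mem_sphere_iff_norm.mp hp₂
  have hchord : ‖(p - c₁) - (p - c₂)‖ = dist c₁ c₂ := by
    rw [sub_sub_sub_cancel_left, ← dist_eq_norm, dist_comm]
  have hsum : 2 - dist c₁ c₂ ≤ ‖(p - c₁) + (p - c₂)‖ := by
    have h := norm_sub_norm_le ((p - c₁) + (p - c₁)) ((p - c₁) - (p - c₂))
    rwa [add_sub_sub_cancel, ← two_smul ℝ, norm_smul, Real.norm_two, hx, hchord, mul_one] at h
  rw [one_mul]
  exact le_min
    (hd_ge.trans (hchord ▸ InnerProductGeometry.norm_sub_le_angle_of_norm_eq_one hx hy))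
    (by linarith [InnerProductGeometry.norm_add_le_pi_sub_angle_of_norm_eq_one hx hy])
end

section
/- Let c₁, c₂ ∈ ℝ² with ‖c₁ - c₂‖ = d ∈ (0, 1.9], and let δ > 0 be small. Then the intersection of the two annuli {x : 1 - δ ≤ ‖x - cᵢ‖ ≤ 1 + δ}, i = 1, 2, is contained in the union of two balls of radius C·δ/d centred on the unit circle around c₁, for an absolute constant C. -/
set_option maxHeartbeats 1000000 in
private lemma key_arith (a b d δ u0 u1 k : ℝ) (hdpos : 0 < d) (hd19 : d ≤ 1.9) (hδ : 0 < δ)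
    (hab : a ^ 2 + b ^ 2 = d ^ 2) (hk0 : 0 ≤ k) (hk2 : k ^ 2 * d ^ 2 = 1 - d ^ 2 / 4)
    (hδd : δ ≤ 0.006 * d) (hδs : δ < 0.01)
    (hX1l : (1 - δ) ^ 2 ≤ u0 ^ 2 + u1 ^ 2) (hX1u : u0 ^ 2 + u1 ^ 2 ≤ (1 + δ) ^ 2)
    (hX2l : (1 - δ) ^ 2 ≤ (u0 - a) ^ 2 + (u1 - b) ^ 2)
    (hX2u : (u0 - a) ^ 2 + (u1 - b) ^ 2 ≤ (1 + δ) ^ 2) :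
    ((u0 - (a / 2 - k * b)) ^ 2 + (u1 - (b / 2 + k * a)) ^ 2) * d ^ 2 ≤ (400 * δ) ^ 2 ∨
    ((u0 - (a / 2 + k * b)) ^ 2 + (u1 - (b / 2 - k * a)) ^ 2) * d ^ 2 ≤ (400 * δ) ^ 2 := by
  obtain ⟨T, hTdef⟩ : ∃ T : ℝ, T = u0 * a + u1 * b := ⟨_, rfl⟩
  obtain ⟨S, hSdef⟩ : ∃ S : ℝ, S = u1 * a - u0 * b := ⟨_, rfl⟩
  have hTS : T ^ 2 + S ^ 2 = (u0 ^ 2 + u1 ^ 2) * d ^ 2 := by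
    rw [hTdef, hSdef]; linear_combination (u0 ^ 2 + u1 ^ 2) * hab
  have hf2 : (u0 - a) ^ 2 + (u1 - b) ^ 2 = u0 ^ 2 + u1 ^ 2 - 2 * T + d ^ 2 := by
    rw [hTdef]; linear_combination hab
  have hTl : -(2 * δ) ≤ T - d ^ 2 / 2 := by linarith
  have hTu : T - d ^ 2 / 2 ≤ 2 * δ := by linarith
  have hT : (T - d ^ 2 / 2) ^ 2 ≤ 4 * δ ^ 2 := by
    have := mul_nonneg (by linarith : (0:ℝ) ≤ 2 * δ - (T - d ^ 2 / 2))
      (by linarith : (0:ℝ) ≤ 2 * δ + (T - d ^ 2 / 2))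
    linarith
  have hδδ : δ ^ 2 ≤ 0.01 * δ := by
    have := mul_nonneg (by linarith : (0:ℝ) ≤ 0.01 - δ) hδ.le; linarith
  have he1l : -(2.01 * δ) ≤ u0 ^ 2 + u1 ^ 2 - 1 := by linarith [sq_nonneg δ]
  have he1u : u0 ^ 2 + u1 ^ 2 - 1 ≤ 2.01 * δ := by linarith [sq_nonneg δ]
  have hd2b : d ^ 2 ≤ 1.9 * d := by
    have := mul_nonneg hdpos.le (by linarith : (0:ℝ) ≤ 1.9 - d); linarith
  have he3l : -(2 * d) ≤ T + d ^ 2 / 2 := by linarith [sq_nonneg d]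
  have he3u : T + d ^ 2 / 2 ≤ 2 * d := by linarith
  have hS2 : (S ^ 2 - k ^ 2 * d ^ 4) ^ 2 ≤ 64 * δ ^ 2 * d ^ 2 := by
    have hgoal : S ^ 2 - k ^ 2 * d ^ 4 =
        (u0 ^ 2 + u1 ^ 2 - 1) * d ^ 2 - (T - d ^ 2 / 2) * (T + d ^ 2 / 2) := by
      linear_combination hTS - d ^ 2 * hk2
    have hP4 := mul_nonneg (mul_nonneg hδ.le hdpos.le) (by linarith : (0:ℝ) ≤ 1.9 - d)
    have hP5 := mul_pos hδ hdpos
    have hup : S ^ 2 - k ^ 2 * d ^ 4 ≤ 8 * δ * d := by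
      rw [hgoal]
      have hP1 := mul_nonneg (by linarith : (0:ℝ) ≤ 2.01 * δ - (u0^2+u1^2-1)) (sq_nonneg d)
      have hP2 := mul_nonneg (by linarith : (0:ℝ) ≤ 2 * δ - (T - d^2/2))
        (by linarith : (0:ℝ) ≤ 2*d - (T + d^2/2))
      have hP3 := mul_nonneg (by linarith : (0:ℝ) ≤ 2 * δ + (T - d^2/2))
        (by linarith : (0:ℝ) ≤ 2*d + (T + d^2/2))
      linarith
    have hlo : -(8 * δ * d) ≤ S ^ 2 - k ^ 2 * d ^ 4 := by
      rw [hgoal]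
      have hP1 := mul_nonneg (by linarith : (0:ℝ) ≤ 2.01 * δ + (u0^2+u1^2-1)) (sq_nonneg d)
      have hP2 := mul_nonneg (by linarith : (0:ℝ) ≤ 2 * δ - (T - d^2/2))
        (by linarith : (0:ℝ) ≤ 2*d + (T + d^2/2))
      have hP3 := mul_nonneg (by linarith : (0:ℝ) ≤ 2 * δ + (T - d^2/2))
        (by linarith : (0:ℝ) ≤ 2*d - (T + d^2/2))
      linarith
    have := mul_nonneg (by linarith : (0:ℝ) ≤ 8 * δ * d - (S ^ 2 - k ^ 2 * d ^ 4))
      (by linarith : (0:ℝ) ≤ 8 * δ * d + (S ^ 2 - k ^ 2 * d ^ 4))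
    linarith
  have hkd : 0.0975 ≤ k ^ 2 * d ^ 2 := by
    have := mul_nonneg (by linarith : (0:ℝ) ≤ 1.9 - d) (by linarith : (0:ℝ) ≤ 1.9 + d)
    rw [hk2]; linarith
  have hkdd : 0.0975 * d ^ 2 ≤ k ^ 2 * d ^ 2 * d ^ 2 := by
    have := mul_nonneg (by linarith : (0:ℝ) ≤ k ^ 2 * d ^ 2 - 0.0975) (sq_nonneg d)
    linarith
  by_cases hS : 0 ≤ S
  · left
    have h1 : k ^ 2 * d ^ 4 ≤ (S + k * d ^ 2) ^ 2 := by
      have := mul_nonneg hS (mul_nonneg hk0 (sq_nonneg d))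
      have h2 := sq_nonneg S
      linarith
    have hball : (S - k * d ^ 2) ^ 2 * (k ^ 2 * d ^ 4) ≤ 64 * δ ^ 2 * d ^ 2 := by
      calc (S - k * d ^ 2) ^ 2 * (k ^ 2 * d ^ 4)
          ≤ (S - k * d ^ 2) ^ 2 * (S + k * d ^ 2) ^ 2 :=
            mul_le_mul_of_nonneg_left h1 (sq_nonneg _)
        _ = (S ^ 2 - k ^ 2 * d ^ 4) ^ 2 := by ring
        _ ≤ 64 * δ ^ 2 * d ^ 2 := hS2
    have hfin : (S - k * d ^ 2) ^ 2 ≤ 657 * δ ^ 2 := by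
      have h2 : (S - k * d ^ 2) ^ 2 * (0.0975 * d ^ 2) ≤ 64 * δ ^ 2 * d ^ 2 := by
        calc (S - k * d ^ 2) ^ 2 * (0.0975 * d ^ 2)
            ≤ (S - k * d ^ 2) ^ 2 * (k ^ 2 * d ^ 2 * d ^ 2) :=
              mul_le_mul_of_nonneg_left hkdd (sq_nonneg _)
          _ = (S - k * d ^ 2) ^ 2 * (k ^ 2 * d ^ 4) := by ring
          _ ≤ 64 * δ ^ 2 * d ^ 2 := hball
      have h3 : (S - k * d ^ 2) ^ 2 * 0.0975 * d ^ 2 ≤ 657 * δ ^ 2 * 0.0975 * d ^ 2 := by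
        linarith [mul_nonneg (sq_nonneg δ) (sq_nonneg d)]
      have h4 := le_of_mul_le_mul_right h3 (pow_pos hdpos 2)
      linarith
    have hiden : ((u0 - (a / 2 - k * b)) ^ 2 + (u1 - (b / 2 + k * a)) ^ 2) * d ^ 2 =
        (T - d ^ 2 / 2) ^ 2 + (S - k * d ^ 2) ^ 2 := by
      rw [hTdef, hSdef]
      linear_combination ((1 / 4 + k ^ 2) * d ^ 2 - (u0 ^ 2 + u1 ^ 2)) * hab
    rw [hiden]; linarith [sq_nonneg δ]
  · right
    push_neg at hS
    have h1 : k ^ 2 * d ^ 4 ≤ (S - k * d ^ 2) ^ 2 := by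
      have := mul_nonneg (by linarith : (0:ℝ) ≤ -S) (mul_nonneg hk0 (sq_nonneg d))
      have h2 := sq_nonneg S
      linarith
    have hball : (S + k * d ^ 2) ^ 2 * (k ^ 2 * d ^ 4) ≤ 64 * δ ^ 2 * d ^ 2 := by
      calc (S + k * d ^ 2) ^ 2 * (k ^ 2 * d ^ 4)
          ≤ (S + k * d ^ 2) ^ 2 * (S - k * d ^ 2) ^ 2 :=
            mul_le_mul_of_nonneg_left h1 (sq_nonneg _)
        _ = (S ^ 2 - k ^ 2 * d ^ 4) ^ 2 := by ring
        _ ≤ 64 * δ ^ 2 * d ^ 2 := hS2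
    have hfin : (S + k * d ^ 2) ^ 2 ≤ 657 * δ ^ 2 := by
      have h2 : (S + k * d ^ 2) ^ 2 * (0.0975 * d ^ 2) ≤ 64 * δ ^ 2 * d ^ 2 := by
        calc (S + k * d ^ 2) ^ 2 * (0.0975 * d ^ 2)
            ≤ (S + k * d ^ 2) ^ 2 * (k ^ 2 * d ^ 2 * d ^ 2) :=
              mul_le_mul_of_nonneg_left hkdd (sq_nonneg _)
          _ = (S + k * d ^ 2) ^ 2 * (k ^ 2 * d ^ 4) := by ring
          _ ≤ 64 * δ ^ 2 * d ^ 2 := hball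
      have h3 : (S + k * d ^ 2) ^ 2 * 0.0975 * d ^ 2 ≤ 657 * δ ^ 2 * 0.0975 * d ^ 2 := by
        linarith [mul_nonneg (sq_nonneg δ) (sq_nonneg d)]
      have h4 := le_of_mul_le_mul_right h3 (pow_pos hdpos 2)
      linarith
    have hiden : ((u0 - (a / 2 + k * b)) ^ 2 + (u1 - (b / 2 - k * a)) ^ 2) * d ^ 2 =
        (T - d ^ 2 / 2) ^ 2 + (S + k * d ^ 2) ^ 2 := by
      rw [hTdef, hSdef]
      linear_combination ((1 / 4 + k ^ 2) * d ^ 2 - (u0 ^ 2 + u1 ^ 2)) * hab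
    rw [hiden]; linarith [sq_nonneg δ]

open Metric Set Real

private lemma sq_le_imp {x y : ℝ} (hx : 0 ≤ x) (hy : 0 ≤ y) (h : x ^ 2 ≤ y ^ 2) : x ≤ y := by
  nlinarith

private lemma dist_sq_e (x y : EuclideanSpace ℝ (Fin 2)) :
    dist x y ^ 2 = (x 0 - y 0) ^ 2 + (x 1 - y 1) ^ 2 := by
  rw [EuclideanSpace.dist_eq, Real.sq_sqrt (by positivity)]
  simp [Fin.sum_univ_two, Real.dist_eq, sq_abs]

set_option maxHeartbeats 1000000 in
theorem annuli_intersection_in_two_balls :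
    ∃ C > 0, ∀ (c₁ c₂ : EuclideanSpace ℝ (Fin 2)) (δ : ℝ),
      0 < δ → 0 < dist c₁ c₂ → dist c₁ c₂ ≤ 1.9 →
      ∃ p ∈ Metric.sphere c₁ 1, ∃ q ∈ Metric.sphere c₁ 1,
        {x | 1 - δ ≤ dist x c₁ ∧ dist x c₁ ≤ 1 + δ} ∩
          {x | 1 - δ ≤ dist x c₂ ∧ dist x c₂ ≤ 1 + δ} ⊆
        Metric.closedBall p (C * δ / dist c₁ c₂) ∪
          Metric.closedBall q (C * δ / dist c₁ c₂) := by
  refine ⟨400, by norm_num, ?_⟩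
  intro c₁ c₂ δ hδ hdpos hd19
  obtain ⟨d, hddef⟩ : ∃ d : ℝ, d = dist c₁ c₂ := ⟨_, rfl⟩
  rw [← hddef] at hdpos hd19 ⊢
  have hd0 : d ≠ 0 := ne_of_gt hdpos
  obtain ⟨a, hadef⟩ : ∃ a : ℝ, a = c₂ 0 - c₁ 0 := ⟨_, rfl⟩
  obtain ⟨b, hbdef⟩ : ∃ b : ℝ, b = c₂ 1 - c₁ 1 := ⟨_, rfl⟩
  have hab : a ^ 2 + b ^ 2 = d ^ 2 := by
    rw [hadef, hbdef, hddef, dist_comm c₁ c₂]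
    exact (dist_sq_e c₂ c₁).symm
  have hd2 : (0:ℝ) ≤ 1 - d ^ 2 / 4 := by
    have := mul_nonneg (by linarith : (0:ℝ) ≤ 1.9 - d) (by linarith : (0:ℝ) ≤ 1.9 + d)
    linarith
  obtain ⟨k, hkdef⟩ : ∃ k : ℝ, k = Real.sqrt (1 - d ^ 2 / 4) / d := ⟨_, rfl⟩
  have hk0 : 0 ≤ k := hkdef ▸ div_nonneg (Real.sqrt_nonneg _) hdpos.le
  have hk2 : k ^ 2 * d ^ 2 = 1 - d ^ 2 / 4 := by
    rw [hkdef, div_pow, div_mul_cancel₀ _ (pow_ne_zero 2 hd0), Real.sq_sqrt hd2]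
  obtain ⟨p, hpdef⟩ : ∃ p : EuclideanSpace ℝ (Fin 2),
      p = (WithLp.equiv 2 (Fin 2 → ℝ)).symm ![c₁ 0 + (a / 2 - k * b), c₁ 1 + (b / 2 + k * a)] :=
    ⟨_, rfl⟩
  obtain ⟨q, hqdef⟩ : ∃ q : EuclideanSpace ℝ (Fin 2),
      q = (WithLp.equiv 2 (Fin 2 → ℝ)).symm ![c₁ 0 + (a / 2 + k * b), c₁ 1 + (b / 2 - k * a)] :=
    ⟨_, rfl⟩
  have hp0 : p 0 = c₁ 0 + (a / 2 - k * b) := by rw [hpdef]; rfl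
  have hp1 : p 1 = c₁ 1 + (b / 2 + k * a) := by rw [hpdef]; rfl
  have hq0 : q 0 = c₁ 0 + (a / 2 + k * b) := by rw [hqdef]; rfl
  have hq1 : q 1 = c₁ 1 + (b / 2 - k * a) := by rw [hqdef]; rfl
  have hpsq : dist p c₁ ^ 2 = 1 := by
    rw [dist_sq_e, hp0, hp1]
    linear_combination (1 / 4 + k ^ 2) * hab + hk2
  have hqsq : dist q c₁ ^ 2 = 1 := by
    rw [dist_sq_e, hq0, hq1]
    linear_combination (1 / 4 + k ^ 2) * hab + hk2
  have hpmem : p ∈ Metric.sphere c₁ 1 := by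
    simp only [mem_sphere]
    rw [← Real.sqrt_sq (dist_nonneg (x := p) (y := c₁)), hpsq, Real.sqrt_one]
  have hqmem : q ∈ Metric.sphere c₁ 1 := by
    simp only [mem_sphere]
    rw [← Real.sqrt_sq (dist_nonneg (x := q) (y := c₁)), hqsq, Real.sqrt_one]
  refine ⟨p, hpmem, q, hqmem, ?_⟩
  intro x hx
  obtain ⟨⟨hx1l, hx1u⟩, hx2l, hx2u⟩ := hx
  by_cases hA : 2 + δ ≤ 400 * δ / d
  · left
    rw [mem_closedBall]
    have h1 : dist x p ≤ dist x c₁ + dist c₁ p := dist_triangle x c₁ p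
    have h2 : dist c₁ p = 1 := by rw [dist_comm]; exact hpmem
    linarith
  · push_neg at hA
    rw [div_lt_iff₀ hdpos] at hA
    have hδs : δ < 0.01 := by
      have := mul_nonneg (by linarith : (0:ℝ) ≤ 1.9 - d) (by linarith : (0:ℝ) ≤ 2 + δ)
      nlinarith
    have hδd : δ ≤ 0.006 * d := by
      have := mul_nonneg (by linarith : (0:ℝ) ≤ 0.01 - δ) hdpos.le
      nlinarith
    obtain ⟨u0, hu0⟩ : ∃ u : ℝ, u = x 0 - c₁ 0 := ⟨_, rfl⟩
    obtain ⟨u1, hu1⟩ : ∃ u : ℝ, u = x 1 - c₁ 1 := ⟨_, rfl⟩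
    have hX1 : dist x c₁ ^ 2 = u0 ^ 2 + u1 ^ 2 := by
      rw [dist_sq_e, hu0, hu1]
    have hX2 : dist x c₂ ^ 2 = (u0 - a) ^ 2 + (u1 - b) ^ 2 := by
      rw [dist_sq_e, hu0, hu1, hadef, hbdef]; ring
    have hX1l : (1 - δ) ^ 2 ≤ u0 ^ 2 + u1 ^ 2 := by
      rw [← hX1]
      have := mul_nonneg (by linarith : (0:ℝ) ≤ dist x c₁ - (1 - δ))
        (by linarith [dist_nonneg (x := x) (y := c₁)] : (0:ℝ) ≤ dist x c₁ + (1 - δ))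
      linarith
    have hX1u : u0 ^ 2 + u1 ^ 2 ≤ (1 + δ) ^ 2 := by
      rw [← hX1]
      have := mul_nonneg (by linarith : (0:ℝ) ≤ (1 + δ) - dist x c₁)
        (by linarith [dist_nonneg (x := x) (y := c₁)] : (0:ℝ) ≤ (1 + δ) + dist x c₁)
      linarith
    have hX2l : (1 - δ) ^ 2 ≤ (u0 - a) ^ 2 + (u1 - b) ^ 2 := by
      rw [← hX2]
      have := mul_nonneg (by linarith : (0:ℝ) ≤ dist x c₂ - (1 - δ))
        (by linarith [dist_nonneg (x := x) (y := c₂)] : (0:ℝ) ≤ dist x c₂ + (1 - δ))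
      linarith
    have hX2u : (u0 - a) ^ 2 + (u1 - b) ^ 2 ≤ (1 + δ) ^ 2 := by
      rw [← hX2]
      have := mul_nonneg (by linarith : (0:ℝ) ≤ (1 + δ) - dist x c₂)
        (by linarith [dist_nonneg (x := x) (y := c₂)] : (0:ℝ) ≤ (1 + δ) + dist x c₂)
      linarith
    have hkey := key_arith a b d δ u0 u1 k hdpos hd19 hδ hab hk0 hk2 hδd hδs hX1l hX1u hX2l hX2u
    have hxp : x 0 - p 0 = u0 - (a / 2 - k * b) := by rw [hp0, hu0]; ring
    have hxp1 : x 1 - p 1 = u1 - (b / 2 + k * a) := by rw [hp1, hu1]; ring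
    have hxq : x 0 - q 0 = u0 - (a / 2 + k * b) := by rw [hq0, hu0]; ring
    have hxq1 : x 1 - q 1 = u1 - (b / 2 - k * a) := by rw [hq1, hu1]; ring
    rcases hkey with hk1 | hk1
    · left
      rw [mem_closedBall, le_div_iff₀ hdpos]
      have hsq : dist x p ^ 2 * d ^ 2 ≤ (400 * δ) ^ 2 := by
        rw [dist_sq_e, hxp, hxp1]; exact hk1
      refine sq_le_imp (mul_nonneg dist_nonneg hdpos.le) (by linarith) ?_
      calc (dist x p * d) ^ 2 = dist x p ^ 2 * d ^ 2 := by ring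
        _ ≤ (400 * δ) ^ 2 := hsq
    · right
      rw [mem_closedBall, le_div_iff₀ hdpos]
      have hsq : dist x q ^ 2 * d ^ 2 ≤ (400 * δ) ^ 2 := by
        rw [dist_sq_e, hxq, hxq1]; exact hk1
      refine sq_le_imp (mul_nonneg dist_nonneg hdpos.le) (by linarith) ?_
      calc (dist x q * d) ^ 2 = dist x q ^ 2 * d ^ 2 := by ring
        _ ≤ (400 * δ) ^ 2 := hsq
end

section
/- There exists a compact set P ⊆ ℝ² with P - P ⊇ S¹ and Hausdorff dimension of P equal to 0. -/
/-!
For `θ ∈ [0, 1)` let `θₖ` be `θ` rounded down to the grid `ℤ / Nₖ`, where `Nₖ = 2 ^ k!`, so that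
`N_{k+1} = N_k ^ (k + 1)`. Then `𝐞 θ = 𝐞 θ₀ + ∑ₖ (𝐞 θ_{k+1} - 𝐞 θₖ)`, and splitting the terms by
the parity of their index writes `𝐞 θ = y θ + x θ`; hence the unit circle lies in `P - P` for
`P = closure (range y) ∪ -closure (range x)`.

If the term of index `K + 1` belongs to the other half, the first `K + 1` terms of a half depend
only on `θ_K`, which takes at most `N_K` values, while the norms `≤ 2π (θ_{k+1} - θ_k)` of the
remaining terms telescope to at most `2π / N_{K+1}`. So each half is covered by `N_K` balls of
radius `2π / N_{K+1}`, and `N_K (2π / N_{K+1}) ^ d → 0` for every `d > 0`.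
-/

open Metric Set Filter Topology Real MeasureTheory FourierTransform
open scoped Pointwise ENNReal

theorem hausdorffMeasure_eq_zero_of_frequently_covers {ι X : Type*} [MetricSpace X]
    [MeasurableSpace X] [BorelSpace X] {l : Filter ι} {s : Set X} {M : ι → ℕ} {r : ι → ℝ}
    (hr0 : ∀ i, 0 ≤ r i) (hr : Tendsto r l (𝓝 0)) {d : ℝ} (hd : 0 < d)
    (hM : Tendsto (fun i => (M i : ℝ) * r i ^ d) l (𝓝 0))
    (hcover : ∃ᶠ i in l, ∃ c : Fin (M i) → X, s ⊆ ⋃ j, closedBall (c j) (r i)) :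
    μH[d] s = 0 := by
  -- the liminf bound needs covers eventually, so pass to the indices that carry one
  set good := {i | ∃ c : Fin (M i) → X, s ⊆ ⋃ j, closedBall (c j) (r i)}
  have : (l ⊓ 𝓟 good).NeBot := frequently_iff_neBot.1 hcover
  have hballs : ∀ i, ∃ t : Fin (M i) → Set X,
      (∀ j, ediam (t j) ≤ ENNReal.ofReal (2 * r i)) ∧ (i ∈ good → s ⊆ ⋃ j, t j) := by
    intro i
    by_cases hi : i ∈ good
    · obtain ⟨c, hc⟩ := hi
      refine ⟨fun j => closedBall (c j) (r i), fun j => ?_, fun _ => hc⟩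
      exact ediam_le_of_forall_dist_le fun x hx y hy => (dist_triangle_right x y (c j)).trans
        (by linarith [mem_closedBall.1 hx, mem_closedBall.1 hy])
    · exact ⟨fun _ => ∅, fun _ => by simp, fun h => absurd h hi⟩
  choose t hdiam hst using hballs
  have hsum : ∀ i, ∑ j, ediam (t i j) ^ d ≤ ENNReal.ofReal (2 ^ d * (M i * r i ^ d)) := by
    intro i
    calc ∑ j, ediam (t i j) ^ d ≤ ∑ _j : Fin (M i), ENNReal.ofReal (2 * r i) ^ d :=
          Finset.sum_le_sum fun j _ => ENNReal.rpow_le_rpow (hdiam i j) hd.le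
      _ = ENNReal.ofReal (2 ^ d * (M i * r i ^ d)) := by
          rw [Finset.sum_const, Finset.card_univ, Fintype.card_fin, nsmul_eq_mul,
            ENNReal.ofReal_rpow_of_nonneg (by linarith [hr0 i]) hd.le, ← ENNReal.ofReal_natCast,
            ← ENNReal.ofReal_mul (Nat.cast_nonneg _), Real.mul_rpow zero_le_two (hr0 i)]
          ring_nf
  have hlim : Tendsto (fun i => ENNReal.ofReal (2 ^ d * (M i * r i ^ d))) (l ⊓ 𝓟 good) (𝓝 0) := by
    simpa using ENNReal.tendsto_ofReal ((hM.const_mul (2 ^ d)).mono_left inf_le_left)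
  have hr' : Tendsto (fun i => ENNReal.ofReal (2 * r i)) (l ⊓ 𝓟 good) (𝓝 0) := by
    simpa using ENNReal.tendsto_ofReal ((hr.const_mul 2).mono_left inf_le_left)
  refine le_antisymm ?_ zero_le
  calc μH[d] s ≤ liminf (fun i => ∑ j, ediam (t i j) ^ d) (l ⊓ 𝓟 good) :=
        Measure.hausdorffMeasure_le_liminf_sum d s _ hr' t (Eventually.of_forall hdiam)
          (eventually_inf_principal.2 (Eventually.of_forall hst))
    _ ≤ 0 := by
        rw [← hlim.liminf_eq]
        exact liminf_le_liminf (Eventually.of_forall hsum)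

theorem dimH_eq_zero_of_frequently_covers {ι X : Type*} [MetricSpace X] {l : Filter ι}
    {s : Set X} {M : ι → ℕ} {r : ι → ℝ} (hr0 : ∀ i, 0 ≤ r i) (hr : Tendsto r l (𝓝 0))
    (hM : ∀ d : ℝ, 0 < d → Tendsto (fun i => (M i : ℝ) * r i ^ d) l (𝓝 0))
    (hcover : ∃ᶠ i in l, ∃ c : Fin (M i) → X, s ⊆ ⋃ j, closedBall (c j) (r i)) :
    dimH s = 0 := by
  borelize X
  refine le_antisymm (dimH_le fun d hd => ?_) zero_le
  by_contra! hpos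
  have hd0 : (0 : ℝ) < d := by exact_mod_cast hpos
  rw [hausdorffMeasure_eq_zero_of_frequently_covers hr0 hr hd0 (hM d hd0) hcover] at hd
  exact ENNReal.zero_ne_top hd

lemma norm_fourierChar_sub_fourierChar_le (a b : ℝ) :
    ‖(𝐞 a : ℂ) - 𝐞 b‖ ≤ 2 * π * |a - b| := by
  have h : (𝐞 a : ℂ) - 𝐞 b = 𝐞 b * (Complex.exp (Complex.I * ↑(2 * π * (a - b))) - 1) := by
    rw [mul_comm Complex.I, ← Real.fourierChar_apply, mul_sub, mul_one, ← Circle.coe_mul,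
      ← AddChar.map_add_eq_mul, add_sub_cancel]
  rw [h, norm_mul, Circle.norm_coe, one_mul]
  refine Real.norm_exp_I_mul_ofReal_sub_one_le.trans_eq ?_
  rw [Real.norm_eq_abs, abs_mul, abs_of_pos Real.two_pi_pos]

lemma sphere_subset_image_fourierChar_Ico :
    sphere (0 : ℂ) 1 ⊆ (fun θ => (𝐞 θ : ℂ)) '' Ico 0 1 := by
  intro z hz
  have hper : Function.Periodic (fun θ => 𝐞 θ) 1 := fun θ => by
    dsimp only
    rw [AddChar.map_add_eq_mul, Real.fourierChar_apply' 1, mul_one, Circle.exp_two_pi, mul_one]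
  obtain ⟨t, ht⟩ := Circle.exp_surjective ⟨z, hz⟩
  obtain ⟨θ, hθ, heq⟩ := hper.exists_mem_Ico₀ one_pos (t / (2 * π))
  have h : 𝐞 θ = ⟨z, hz⟩ := by
    rw [← heq, Real.fourierChar_apply', mul_div_cancel₀ _ Real.two_pi_pos.ne', ht]
  exact ⟨θ, hθ, congrArg Subtype.val h⟩

namespace Dipole

def scale (k : ℕ) : ℕ := 2 ^ k.factorial

lemma scale_pos (k : ℕ) : (0 : ℝ) < scale k := by unfold scale; positivity

lemma exists_scale_eq_mul {j k : ℕ} (h : j ≤ k) :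
    ∃ D : ℕ, (D : ℝ) ≠ 0 ∧ (scale k : ℝ) = scale j * D := by
  obtain ⟨D, hD⟩ := pow_dvd_pow 2 (Nat.factorial_le h)
  refine ⟨D, ?_, by rw [scale, scale, hD, Nat.cast_mul]⟩
  rintro h0
  simp_all

lemma scale_succ (k : ℕ) : scale (k + 1) = scale k ^ (k + 1) := by
  rw [scale, scale, ← pow_mul, Nat.factorial_succ, mul_comm]

lemma tendsto_scale_atTop : Tendsto (fun k => (scale k : ℝ)) atTop atTop :=
  tendsto_natCast_atTop_atTop.comp <| tendsto_atTop_mono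
    (fun k => (Nat.self_le_factorial k).trans (Nat.lt_two_pow_self).le) tendsto_id

lemma tendsto_scale_mul_div_scale_succ_rpow {c d : ℝ} (hc : 0 ≤ c) (hd : 0 < d) :
    Tendsto (fun k => (scale k : ℝ) * (c / scale (k + 1)) ^ d) atTop (𝓝 0) := by
  have hlim : Tendsto (fun k => c ^ d / scale k) atTop (𝓝 0) :=
    tendsto_const_nhds.div_atTop tendsto_scale_atTop
  obtain ⟨k₀, hk₀⟩ := exists_nat_ge (2 / d)
  refine squeeze_zero' (Eventually.of_forall fun k => by positivity) ?_ hlim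
  filter_upwards [eventually_ge_atTop k₀] with k hk
  have hN : (1 : ℝ) ≤ scale k := by exact_mod_cast Nat.one_le_two_pow
  have hexp : (2 : ℝ) ≤ (k + 1 : ℕ) * d := by
    rw [div_le_iff₀ hd] at hk₀
    have : (k₀ : ℝ) ≤ k := by exact_mod_cast hk
    push_cast; nlinarith
  have hpow : (scale k : ℝ) ^ 2 ≤ (scale (k + 1) : ℝ) ^ d := by
    rw [← Real.rpow_two, scale_succ, Nat.cast_pow, ← Real.rpow_natCast,
      ← Real.rpow_mul (scale_pos k).le]
    exact Real.rpow_le_rpow_of_exponent_le hN hexp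
  rw [Real.div_rpow hc (Nat.cast_nonneg _)]
  calc (scale k : ℝ) * (c ^ d / (scale (k + 1) : ℝ) ^ d)
      ≤ scale k * (c ^ d / scale k ^ 2) := by gcongr
    _ = c ^ d / scale k := by field_simp

noncomputable def trunc (k : ℕ) (θ : ℝ) : ℝ := ⌊scale k * θ⌋₊ / scale k

lemma trunc_nonneg (k : ℕ) (θ : ℝ) : 0 ≤ trunc k θ := by unfold trunc; positivity

lemma trunc_le {θ : ℝ} (hθ : 0 ≤ θ) (k : ℕ) : trunc k θ ≤ θ := by
  rw [trunc, div_le_iff₀ (scale_pos k), mul_comm]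
  exact Nat.floor_le (by positivity)

lemma lt_trunc_add (k : ℕ) (θ : ℝ) : θ < trunc k θ + 1 / scale k := by
  rw [trunc, ← add_div, lt_div_iff₀ (scale_pos k), mul_comm]
  exact Nat.lt_floor_add_one _

lemma trunc_trunc_of_le {j k : ℕ} (h : j ≤ k) (θ : ℝ) : trunc j (trunc k θ) = trunc j θ := by
  obtain ⟨D, hD0, hcast⟩ := exists_scale_eq_mul h
  have h1 : (scale j : ℝ) * trunc k θ = (⌊(scale k : ℝ) * θ⌋₊ : ℝ) / D := by
    rw [trunc, hcast]; field_simp [(scale_pos j).ne']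
  have h2 : (scale j : ℝ) * θ = (scale k : ℝ) * θ / D := by
    rw [hcast]; field_simp
  rw [trunc, h1, trunc, h2, Nat.floor_div_eq_div, Nat.floor_div_natCast]

lemma monotone_trunc (θ : ℝ) : Monotone (trunc · θ) :=
  monotone_nat_of_le_succ fun k => by
    simpa only [trunc_trunc_of_le k.le_succ] using trunc_le (trunc_nonneg (k + 1) θ) k

lemma tendsto_trunc {θ : ℝ} (hθ : 0 ≤ θ) : Tendsto (trunc · θ) atTop (𝓝 θ) := by
  have hlim : Tendsto (fun k => θ - 1 / scale k) atTop (𝓝 θ) := by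
    simpa using tendsto_const_nhds.sub
      ((tendsto_const_nhds (x := (1 : ℝ))).div_atTop tendsto_scale_atTop)
  refine tendsto_of_tendsto_of_tendsto_of_le_of_le hlim tendsto_const_nhds (fun k => ?_)
    (trunc_le hθ)
  linarith [lt_trunc_add k θ]

lemma hasSum_trunc_succ_sub {θ : ℝ} (hθ : 0 ≤ θ) (n : ℕ) :
    HasSum (fun j => trunc (j + n + 1) θ - trunc (j + n) θ) (θ - trunc n θ) := by
  rw [hasSum_iff_tendsto_nat_of_nonneg fun j => sub_nonneg.2 (monotone_trunc θ (by omega))]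
  have hsum (m : ℕ) : ∑ j ∈ Finset.range m, (trunc (j + n + 1) θ - trunc (j + n) θ) =
      trunc (m + n) θ - trunc n θ := by
    simpa [add_right_comm] using Finset.sum_range_sub (fun j => trunc (j + n) θ) m
  simp_rw [hsum]
  exact ((tendsto_trunc hθ).comp (tendsto_add_atTop_nat n)).sub_const _

noncomputable def term : ℕ → ℝ → ℂ
  | 0, θ => 𝐞 (trunc 0 θ)
  | k + 1, θ => 𝐞 (trunc (k + 1) θ) - 𝐞 (trunc k θ)

lemma sum_range_succ_term (K : ℕ) (θ : ℝ) :
    ∑ k ∈ Finset.range (K + 1), term k θ = 𝐞 (trunc K θ) := by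
  induction K with
  | zero => simp [term]
  | succ K ih => rw [Finset.sum_range_succ, ih, term, add_sub_cancel]

lemma term_trunc {k K : ℕ} (h : k ≤ K) (θ : ℝ) : term k (trunc K θ) = term k θ := by
  cases k with
  | zero => rw [term, term, trunc_trunc_of_le h]
  | succ k => rw [term, term, trunc_trunc_of_le h, trunc_trunc_of_le (by omega)]

lemma norm_term_succ_le (k : ℕ) (θ : ℝ) :
    ‖term (k + 1) θ‖ ≤ 2 * π * (trunc (k + 1) θ - trunc k θ) := by
  rw [term, ← abs_of_nonneg (sub_nonneg.2 (monotone_trunc θ k.le_succ))]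
  exact norm_fourierChar_sub_fourierChar_le _ _

lemma summable_norm_term {θ : ℝ} (hθ : 0 ≤ θ) : Summable (‖term · θ‖) := by
  refine (summable_nat_add_iff 1).1 (Summable.of_nonneg_of_le (fun _ => norm_nonneg _)
    (fun k => norm_term_succ_le k θ) ?_)
  simpa using ((hasSum_trunc_succ_sub hθ 0).mul_left (2 * π)).summable

lemma hasSum_term {θ : ℝ} (hθ : 0 ≤ θ) : HasSum (term · θ) (𝐞 θ) := by
  rw [(summable_norm_term hθ).of_norm.hasSum_iff_tendsto_nat, ← tendsto_add_atTop_iff_nat 1]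
  simp_rw [sum_range_succ_term]
  exact (continuous_subtype_val.comp Real.continuous_fourierChar).continuousAt.tendsto.comp
    (tendsto_trunc hθ)

noncomputable def maskedSum (S : Set ℕ) (θ : ℝ) : ℂ := ∑' k, S.indicator (term · θ) k

lemma summable_indicator_term (S : Set ℕ) {θ : ℝ} (hθ : 0 ≤ θ) :
    Summable (S.indicator (term · θ)) :=
  .of_norm_bounded (summable_norm_term hθ) fun _ => norm_indicator_le_norm_self _ _

lemma maskedSum_add_maskedSum_compl (S : Set ℕ) {θ : ℝ} (hθ : 0 ≤ θ) :
    maskedSum S θ + maskedSum Sᶜ θ = 𝐞 θ := by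
  rw [maskedSum, maskedSum,
    ← (summable_indicator_term S hθ).tsum_add (summable_indicator_term Sᶜ hθ)]
  simp only [indicator_self_add_compl_apply]
  exact (hasSum_term hθ).tsum_eq

lemma sum_range_indicator_term_trunc (S : Set ℕ) (K : ℕ) (θ : ℝ) :
    ∑ k ∈ Finset.range (K + 1), S.indicator (term · (trunc K θ)) k =
      ∑ k ∈ Finset.range (K + 1), S.indicator (term · θ) k :=
  Finset.sum_congr rfl fun k hk => by
    simp only [Set.indicator, term_trunc (Nat.lt_succ_iff.1 (Finset.mem_range.1 hk))]

lemma dist_maskedSum_sum_range_le {S : Set ℕ} {K : ℕ} (hK : K + 1 ∉ S) {θ : ℝ} (hθ : 0 ≤ θ) :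
    dist (maskedSum S θ) (∑ k ∈ Finset.range (K + 1), S.indicator (term · θ) k) ≤
      2 * π / scale (K + 1) := by
  have hsplit := (summable_indicator_term S hθ).sum_add_tsum_nat_add (K + 2)
  rw [Finset.sum_range_succ, indicator_of_notMem hK, add_zero] at hsplit
  rw [maskedSum, ← hsplit, dist_eq_norm, add_sub_cancel_left]
  calc ‖∑' j, S.indicator (term · θ) (j + (K + 2))‖ ≤ 2 * π * (θ - trunc (K + 1) θ) :=
        tsum_of_norm_bounded ((hasSum_trunc_succ_sub hθ (K + 1)).mul_left (2 * π)) fun j =>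
          (norm_indicator_le_norm_self _ _).trans (norm_term_succ_le (j + (K + 1)) θ)
    _ ≤ 2 * π / scale (K + 1) := by
        rw [← mul_one_div]
        gcongr
        linarith [lt_trunc_add (K + 1) θ]

lemma maskedSum_image_subset_iUnion_closedBall {S : Set ℕ} {K : ℕ} (hK : K + 1 ∉ S) :
    maskedSum S '' Ico 0 1 ⊆ ⋃ i : Fin (scale K), closedBall
      (∑ k ∈ Finset.range (K + 1), S.indicator (term · ((i : ℕ) / scale K : ℝ)) k)
      (2 * π / scale (K + 1)) := by
  rintro _ ⟨θ, hθ, rfl⟩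
  have hlt : ⌊(scale K : ℝ) * θ⌋₊ < scale K := by
    rw [Nat.floor_lt (mul_nonneg (scale_pos K).le hθ.1)]
    nlinarith [hθ.2, scale_pos K]
  refine mem_iUnion.2 ⟨⟨_, hlt⟩, ?_⟩
  rw [mem_closedBall]
  exact (sum_range_indicator_term_trunc S K θ).symm ▸ dist_maskedSum_sum_range_le hK hθ.1

lemma isCompact_closure_maskedSum_image {S : Set ℕ} {K : ℕ} (hK : K + 1 ∉ S) :
    IsCompact (closure (maskedSum S '' Ico 0 1)) :=
  ((Bornology.isBounded_iUnion.2 fun _ => isBounded_closedBall).subset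
    (maskedSum_image_subset_iUnion_closedBall hK)).isCompact_closure

lemma dimH_closure_maskedSum_image {S : Set ℕ} (hS : ∃ᶠ K in atTop, K + 1 ∉ S) :
    dimH (closure (maskedSum S '' Ico 0 1)) = 0 :=
  dimH_eq_zero_of_frequently_covers (M := scale) (r := fun K => 2 * π / scale (K + 1))
    (fun _ => by positivity)
    (tendsto_const_nhds.div_atTop (tendsto_scale_atTop.comp (tendsto_add_atTop_nat 1)))
    (fun _ hd => tendsto_scale_mul_div_scale_succ_rpow Real.two_pi_pos.le hd)
    (hS.mono fun _ hK => ⟨_, closure_minimal (maskedSum_image_subset_iUnion_closedBall hK)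
      (isClosed_iUnion_of_finite fun _ => isClosed_closedBall)⟩)

end Dipole

open Dipole in
theorem exists_isCompact_sphere_subset_sub_dimH_eq_zero :
    ∃ P : Set ℂ, IsCompact P ∧ sphere 0 1 ⊆ P - P ∧ dimH P = 0 := by
  let S := {k : ℕ | Even k}
  have hS : ∃ᶠ K in atTop, K + 1 ∉ S :=
    Nat.frequently_even.mono fun K hK => by simpa [S, Nat.even_add_one] using hK
  have hSc : ∃ᶠ K in atTop, K + 1 ∉ Sᶜ :=
    Nat.frequently_odd.mono fun K hK => by simpa [S, Nat.even_add_one] using hK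
  obtain ⟨K, hK⟩ := hS.exists
  obtain ⟨K', hK'⟩ := hSc.exists
  refine ⟨closure (maskedSum S '' Ico 0 1) ∪ -closure (maskedSum Sᶜ '' Ico 0 1),
    (isCompact_closure_maskedSum_image hK).union (isCompact_closure_maskedSum_image hK').neg,
    ?_, ?_⟩
  · intro z hz
    obtain ⟨θ, hθ, rfl⟩ := sphere_subset_image_fourierChar_Ico hz
    show (𝐞 θ : ℂ) ∈ _
    rw [← maskedSum_add_maskedSum_compl S hθ.1, ← sub_neg_eq_add]
    exact sub_mem_sub (Or.inl (subset_closure (mem_image_of_mem _ hθ)))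
      (Or.inr (by simpa using subset_closure (mem_image_of_mem _ hθ)))
  · rw [dimH_union, ← image_neg_eq_neg, isometry_neg.dimH_image, dimH_closure_maskedSum_image hS,
      dimH_closure_maskedSum_image hSc, max_self]

theorem exists_compact_dipole_dimH_zero :
    ∃ P : Set (EuclideanSpace ℝ (Fin 2)), IsCompact P ∧
      Metric.sphere (0 : EuclideanSpace ℝ (Fin 2)) 1 ⊆ P - P ∧
      dimH P = 0 := by
  obtain ⟨P, hP, hsub, hdim⟩ := exists_isCompact_sphere_subset_sub_dimH_eq_zero
  let e := Complex.orthonormalBasisOneI.repr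
  refine ⟨e '' P, hP.image e.continuous, fun v hv => ?_, by rw [e.isometry.dimH_image, hdim]⟩
  obtain ⟨a, ha, b, hb, hab⟩ := hsub (show e.symm v ∈ sphere 0 1 by simpa using hv)
  exact ⟨e a, mem_image_of_mem e ha, e b, mem_image_of_mem e hb,
    by simp only [← map_sub, hab, e.apply_symm_apply]⟩
end
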